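/- Let φ(t) = t log₂^{1/2}(2/t) on (0,1]. The Orlicz space L_N on [0,1] with N(u) = exp(u²) − 1 coincides with the Marcinkiewicz space M(φ) whose norm is ‖x‖ = sup_{0<t≤1} φ(t)^{-1} ∫_0^t x*(s) ds, with equivalent norms. -/

import Mathlib

open MeasureTheory
open scoped ENNReal

/-- Lebesgue measure on `[0,1]`. -/
noncomputable def unitMeasure : Measure ℝ := volume.restrict (Set.Icc 0 1)

/-- The nonincreasing rearrangement of `|x|` on `[0,1]`. -/
noncomputable def decRearr (x : ℝ → ℝ) (s : ℝ) : ℝ :=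
  sInf {τ : ℝ | 0 ≤ τ ∧ unitMeasure {t | τ < |x t|} ≤ ENNReal.ofReal s}

/-- The Luxemburg norm of the Orlicz space `L_N` on `[0,1]`, `N(u) = exp(u²) - 1`. -/
noncomputable def luxemburgN (z : ℝ → ℝ) : ℝ≥0∞ :=
  ⨅ (u : ℝ) (_ : 0 < u ∧
    (∫⁻ t in Set.Icc (0:ℝ) 1, ENNReal.ofReal (Real.exp ((z t / u) ^ 2) - 1)) ≤ 1),
    ENNReal.ofReal u

/-- The function `φ(t) = t log₂^{1/2}(2/t)`. -/
noncomputable def phi (t : ℝ) : ℝ := t * Real.sqrt (Real.logb 2 (2 / t))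

/-- The Marcinkiewicz norm `‖x‖_{M(φ)} = sup_{0 < t ≤ 1} φ(t)⁻¹ ∫_0^t x*(s) ds`. -/
noncomputable def marcinkiewiczNorm (x : ℝ → ℝ) : ℝ≥0∞ :=
  ⨆ (t : ℝ) (_ : t ∈ Set.Ioc (0:ℝ) 1),
    (ENNReal.ofReal (phi t))⁻¹ * ∫⁻ s in Set.Ioc (0:ℝ) t, ENNReal.ofReal (decRearr x s)

/-!
Both inequalities go through the rearrangement `x*`. If `∫ (exp ((x/u)²) - 1) ≤ 1`, Chebyshev's
inequality gives `x*(s) ≤ u √(log (2/s))`, and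
`∫₀ᵗ √(log (2/s)) ds ≤ (1 + 1/log 2) t √(log (2/t))`, a constant multiple of `φ(t)`.
Conversely `t x*(t) ≤ ∫₀ᵗ x* ≤ ‖x‖ φ(t)` gives `x*(t) ≤ ‖x‖ √(log₂ (2/t))`, i.e.
`|{|x| > τ}| ≤ 2 · 2^{-(τ/‖x‖)²}`; by the layer-cake formula the Orlicz modular at
`u = 2‖x‖/√(log 2)` is then at most `∫₀^∞ 2 (1+l)⁻⁴ dl = 2/3`.
-/

open Set Filter Real Topology intervalIntegral

instance : IsProbabilityMeasure unitMeasure :=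
  ⟨by simp [unitMeasure]⟩

lemma lt_exp_sq_sub_one_iff {l u y : ℝ} (hl : 0 ≤ l) (hu : 0 < u) :
    l < exp ((y / u) ^ 2) - 1 ↔ u * √(log (1 + l)) < |y| := by
  rw [lt_sub_iff_add_lt, add_comm, ← log_lt_iff_lt_exp (by linarith),
    ← Real.sqrt_lt_sqrt_iff (log_nonneg (by linarith)), Real.sqrt_sq_eq_abs, abs_div,
    abs_of_pos hu, lt_div_iff₀ hu, mul_comm]

lemma lintegral_Ioc_log_two_div {t : ℝ} (ht0 : 0 < t) (ht2 : t ≤ 2) :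
    ∫⁻ s in Ioc 0 t, ENNReal.ofReal (log (2 / s)) = ENNReal.ofReal (t * log (2 / t) + t) := by
  have hcongr : EqOn (fun s => log (2 / s)) (fun s => log 2 - log s) (Ioc 0 t) :=
    fun s hs => log_div two_ne_zero hs.1.ne'
  have hint : IntegrableOn (fun s => log (2 / s)) (Ioc 0 t) :=
    ((intervalIntegrable_const.sub intervalIntegrable_log').1).congr_fun hcongr.symm
      measurableSet_Ioc
  have hnonneg : 0 ≤ᵐ[volume.restrict (Ioc 0 t)] fun s => log (2 / s) :=
    (ae_restrict_iff' measurableSet_Ioc).2 <| ae_of_all _ fun s hs =>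
      log_nonneg ((le_div_iff₀ hs.1).2 (by linarith [hs.2]))
  rw [← ofReal_integral_eq_lintegral_ofReal hint hnonneg, setIntegral_congr_fun measurableSet_Ioc
    hcongr, ← integral_of_le ht0.le, integral_sub
    intervalIntegrable_const intervalIntegrable_log', integral_log, log_div two_ne_zero ht0.ne']
  simp only [intervalIntegral.integral_const, sub_zero, smul_eq_mul, log_zero, mul_zero,
    add_zero]
  congr 1
  ring

lemma lintegral_Ioi_one_add_rpow_neg {p : ℝ} (hp : 1 < p) :
    ∫⁻ l in Ioi 0, ENNReal.ofReal ((1 + l) ^ (-p)) = ENNReal.ofReal (1 / (p - 1)) := by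
  have hshift := (measurePreserving_add_left volume (1 : ℝ)).setLIntegral_comp_preimage
    measurableSet_Ioi (s := Ioi 1) (f := fun y => ENNReal.ofReal (y ^ (-p))) (by fun_prop)
  have hpre : (fun l : ℝ => 1 + l) ⁻¹' Ioi 1 = Ioi 0 := by ext; simp
  rw [hpre] at hshift
  rw [hshift, ← ofReal_integral_eq_lintegral_ofReal
    (integrableOn_Ioi_rpow_of_lt (by linarith) one_pos)
    ((ae_restrict_iff' measurableSet_Ioi).2 <| ae_of_all _ fun y hy =>
      rpow_nonneg (zero_le_one.trans hy.le) _),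
    integral_Ioi_rpow_of_lt (by linarith) one_pos]
  rw [one_rpow, show -p + 1 = -(p - 1) by ring, div_neg, neg_div, neg_neg]

lemma lintegral_Ioc_sqrt_log_two_div_le {t : ℝ} (ht0 : 0 < t) (ht1 : t ≤ 1) :
    ∫⁻ s in Ioc 0 t, ENNReal.ofReal √(log (2 / s))
      ≤ ENNReal.ofReal ((1 + (log 2)⁻¹) * (t * √(log (2 / t)))) := by
  have hlog2 : 0 < log 2 := log_pos one_lt_two
  have hlog_le : ∀ s ∈ Ioc 0 t, log 2 ≤ log (2 / s) := fun s hs =>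
    log_le_log two_pos ((le_div_iff₀ hs.1).2 (by linarith [hs.2]))
  set A := √(log (2 / t))
  have hA2 : A ^ 2 = log (2 / t) := sq_sqrt (hlog2.trans_le (hlog_le t ⟨ht0, le_rfl⟩)).le
  have hA : 0 < A := sqrt_pos.2 (hlog2.trans_le (hlog_le t ⟨ht0, le_rfl⟩))
  have hpoint : ∀ s ∈ Ioc 0 t,
      ENNReal.ofReal √(log (2 / s)) ≤ ENNReal.ofReal (log (2 / s)) * ENNReal.ofReal A⁻¹ := by
    intro s hs
    have hs2 := hlog2.trans_le (hlog_le s hs)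
    have hAs : A ≤ √(log (2 / s)) :=
      sqrt_le_sqrt (log_le_log (by positivity) (div_le_div_of_nonneg_left zero_le_two hs.1 hs.2))
    rw [← ENNReal.ofReal_mul hs2.le, ← div_eq_mul_inv, ← div_sqrt]
    exact ENNReal.ofReal_le_ofReal (div_le_div_of_nonneg_left hs2.le hA hAs)
  calc ∫⁻ s in Ioc 0 t, ENNReal.ofReal √(log (2 / s))
      ≤ ∫⁻ s in Ioc 0 t, ENNReal.ofReal (log (2 / s)) * ENNReal.ofReal A⁻¹ :=
        setLIntegral_mono' measurableSet_Ioc hpoint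
    _ = ENNReal.ofReal ((t * A ^ 2 + t) * A⁻¹) := by
        rw [lintegral_mul_const' _ _ ENNReal.ofReal_ne_top, lintegral_Ioc_log_two_div ht0
          (by linarith), hA2, ENNReal.ofReal_mul (by rw [← hA2]; positivity)]
    _ ≤ ENNReal.ofReal ((1 + (log 2)⁻¹) * (t * A)) := by
        refine ENNReal.ofReal_le_ofReal ?_
        have : A⁻¹ ≤ A / log 2 := by
          rw [inv_le_iff_one_le_mul₀ hA, div_mul_eq_mul_div, le_div_iff₀ hlog2, one_mul, ← sq,
            hA2]
          exact hlog_le t ⟨ht0, le_rfl⟩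
        calc (t * A ^ 2 + t) * A⁻¹ = t * A + t * A⁻¹ := by field_simp
          _ ≤ t * A + t * (A / log 2) := by gcongr
          _ = (1 + (log 2)⁻¹) * (t * A) := by ring

lemma phi_mul_sqrt_log_two (t : ℝ) : phi t * √(log 2) = t * √(log (2 / t)) := by
  rw [phi, logb, sqrt_div' _ (log_nonneg one_le_two), mul_assoc,
    div_mul_cancel₀ _ (sqrt_pos.2 (log_pos one_lt_two)).ne']

lemma phi_pos {t : ℝ} (ht : t ∈ Ioc (0 : ℝ) 1) : 0 < phi t :=
  mul_pos ht.1 (sqrt_pos.2 (logb_pos one_lt_two ((lt_div_iff₀ ht.1).2 (by linarith [ht.2]))))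

noncomputable def orliczModular (x : ℝ → ℝ) (u : ℝ) : ℝ≥0∞ :=
  ∫⁻ t in Icc 0 1, ENNReal.ofReal (exp ((x t / u) ^ 2) - 1)

section

variable {x : ℝ → ℝ}

lemma decRearr_le {s τ : ℝ} (hτ : 0 ≤ τ)
    (h : unitMeasure {t | τ < |x t|} ≤ ENNReal.ofReal s) : decRearr x s ≤ τ :=
  csInf_le ⟨0, fun _ hτ => hτ.1⟩ ⟨hτ, h⟩

lemma tendsto_measure_lt_abs_atTop (hx : Measurable x) :
    Tendsto (fun τ => unitMeasure {t | τ < |x t|}) atTop (𝓝 0) := by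
  have hempty : (⋂ τ : ℝ, {t | τ < |x t|}) = ∅ :=
    eq_empty_of_forall_notMem fun t ht => lt_irrefl |x t| (mem_iInter.1 ht |x t|)
  rw [← measure_empty (μ := unitMeasure), ← hempty]
  exact tendsto_measure_iInter_atTop
    (fun τ => (measurableSet_lt measurable_const hx.abs).nullMeasurableSet)
    (fun _ _ h _ ht => lt_of_le_of_lt h ht) ⟨0, measure_ne_top _ _⟩

lemma decRearr_setOf_nonempty (hx : Measurable x) {s : ℝ} (hs : 0 < s) :
    {τ : ℝ | 0 ≤ τ ∧ unitMeasure {t | τ < |x t|} ≤ ENNReal.ofReal s}.Nonempty :=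
  (((tendsto_measure_lt_abs_atTop hx).eventually (Iic_mem_nhds (by simpa using hs))).and
    (eventually_ge_atTop 0)).exists.imp fun _ h => ⟨h.2, h.1⟩

lemma measure_lt_abs_le_of_decRearr_lt (hx : Measurable x) {s τ : ℝ} (hs : 0 < s)
    (h : decRearr x s < τ) : unitMeasure {t | τ < |x t|} ≤ ENNReal.ofReal s := by
  obtain ⟨τ', hτ', hτ'τ⟩ := exists_lt_of_csInf_lt (decRearr_setOf_nonempty hx hs) h
  exact (measure_mono fun t ht => hτ'τ.trans ht).trans hτ'.2

lemma decRearr_antitoneOn (hx : Measurable x) : AntitoneOn (decRearr x) (Ioi 0) :=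
  fun _ hs _ _ hst => csInf_le_csInf ⟨0, fun _ hτ => hτ.1⟩ (decRearr_setOf_nonempty hx hs)
    fun _ hτ => ⟨hτ.1, hτ.2.trans (ENNReal.ofReal_le_ofReal hst)⟩

lemma ofReal_mul_decRearr_le_lintegral (hx : Measurable x) {t : ℝ} (ht : 0 < t) :
    ENNReal.ofReal (t * decRearr x t) ≤ ∫⁻ s in Ioc 0 t, ENNReal.ofReal (decRearr x s) :=
  calc ENNReal.ofReal (t * decRearr x t) = ∫⁻ _ in Ioc 0 t, ENNReal.ofReal (decRearr x t) := by
        rw [setLIntegral_const, Real.volume_Ioc, sub_zero, ENNReal.ofReal_mul ht.le, mul_comm]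
    _ ≤ _ := setLIntegral_mono' measurableSet_Ioc fun s hs =>
        ENNReal.ofReal_le_ofReal (decRearr_antitoneOn hx hs.1 ht hs.2)

lemma luxemburgN_le {u : ℝ} (hu : 0 < u) (h : orliczModular x u ≤ 1) :
    luxemburgN x ≤ ENNReal.ofReal u :=
  iInf₂_le u ⟨hu, h⟩

lemma le_luxemburgN {a : ℝ≥0∞}
    (h : ∀ u, 0 < u → orliczModular x u ≤ 1 → a ≤ ENNReal.ofReal u) :
    a ≤ luxemburgN x :=
  le_iInf₂ fun u hu => h u hu.1 hu.2

lemma measurable_exp_sq_sub_one (hx : Measurable x) (u : ℝ) :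
    Measurable fun t => exp ((x t / u) ^ 2) - 1 := by
  fun_prop

lemma decRearr_le_of_orliczModular_le_one (hx : Measurable x) {u s : ℝ} (hu : 0 < u)
    (h : orliczModular x u ≤ 1) (hs : s ∈ Ioc (0 : ℝ) 1) :
    decRearr x s ≤ u * √(log (2 / s)) := by
  have hs1 : 1 ≤ 1 / s := (le_div_iff₀ hs.1).2 (by linarith [hs.2])
  have hsub : {t | u * √(log (2 / s)) < |x t|}
      ⊆ {t | ENNReal.ofReal (1 / s) ≤ ENNReal.ofReal (exp ((x t / u) ^ 2) - 1)} := by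
    intro t ht
    have h2s : 2 / s = 2 * (1 / s) := by ring
    have ht' : u * √(log (1 + (2 / s - 1))) < |x t| := by rwa [add_sub_cancel]
    have hlt := (lt_exp_sq_sub_one_iff (by linarith) hu).2 ht'
    exact ENNReal.ofReal_le_ofReal (by linarith)
  refine decRearr_le (by positivity) ?_
  calc unitMeasure {t | u * √(log (2 / s)) < |x t|}
      ≤ orliczModular x u / ENNReal.ofReal (1 / s) :=
        (measure_mono hsub).trans (meas_ge_le_lintegral_div
          (measurable_exp_sq_sub_one hx u).ennreal_ofReal.aemeasurable
          (by simpa using hs.1) ENNReal.ofReal_ne_top)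
    _ ≤ 1 / ENNReal.ofReal (1 / s) := by gcongr
    _ = ENNReal.ofReal s := by rw [one_div, one_div, ENNReal.ofReal_inv_of_pos hs.1, inv_inv]

lemma marcinkiewiczNorm_le_of_orliczModular_le_one (hx : Measurable x) {u : ℝ} (hu : 0 < u)
    (h : orliczModular x u ≤ 1) :
    marcinkiewiczNorm x ≤ ENNReal.ofReal ((1 + (log 2)⁻¹) * √(log 2) * u) := by
  refine iSup₂_le fun t ht => ?_
  rw [ENNReal.inv_mul_le_iff (by simpa using phi_pos ht) ENNReal.ofReal_ne_top,
    ← ENNReal.ofReal_mul (phi_pos ht).le]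
  calc ∫⁻ s in Ioc 0 t, ENNReal.ofReal (decRearr x s)
      ≤ ∫⁻ s in Ioc 0 t, ENNReal.ofReal u * ENNReal.ofReal √(log (2 / s)) :=
        setLIntegral_mono' measurableSet_Ioc fun s hs => by
          rw [← ENNReal.ofReal_mul hu.le]
          exact ENNReal.ofReal_le_ofReal
            (decRearr_le_of_orliczModular_le_one hx hu h ⟨hs.1, hs.2.trans ht.2⟩)
    _ = ENNReal.ofReal u * ∫⁻ s in Ioc 0 t, ENNReal.ofReal √(log (2 / s)) :=
        lintegral_const_mul' _ _ ENNReal.ofReal_ne_top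
    _ ≤ ENNReal.ofReal u * ENNReal.ofReal ((1 + (log 2)⁻¹) * (t * √(log (2 / t)))) := by
        gcongr; exact lintegral_Ioc_sqrt_log_two_div_le ht.1 ht.2
    _ = ENNReal.ofReal (phi t * ((1 + (log 2)⁻¹) * √(log 2) * u)) := by
        rw [← ENNReal.ofReal_mul hu.le, ← phi_mul_sqrt_log_two]
        ring_nf

lemma decRearr_le_of_marcinkiewiczNorm_le (hx : Measurable x) {m t : ℝ} (hm : 0 ≤ m)
    (hM : marcinkiewiczNorm x ≤ ENNReal.ofReal m) (ht : t ∈ Ioc (0 : ℝ) 1) :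
    decRearr x t ≤ m * √(logb 2 (2 / t)) := by
  have hint :
      ENNReal.ofReal (t * decRearr x t) ≤ ENNReal.ofReal (t * (m * √(logb 2 (2 / t)))) :=
    calc ENNReal.ofReal (t * decRearr x t)
        ≤ ∫⁻ s in Ioc 0 t, ENNReal.ofReal (decRearr x s) :=
          ofReal_mul_decRearr_le_lintegral hx ht.1
      _ ≤ ENNReal.ofReal (phi t) * ENNReal.ofReal m :=
          (ENNReal.inv_mul_le_iff (by simpa using phi_pos ht) ENNReal.ofReal_ne_top).1
            ((le_iSup₂ (f := fun t (_ : t ∈ Ioc (0 : ℝ) 1) => (ENNReal.ofReal (phi t))⁻¹ *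
              ∫⁻ s in Ioc 0 t, ENNReal.ofReal (decRearr x s)) t ht).trans hM)
      _ = ENNReal.ofReal (t * (m * √(logb 2 (2 / t)))) := by
          rw [← ENNReal.ofReal_mul (phi_pos ht).le, phi]
          ring_nf
  exact le_of_mul_le_mul_left
    ((ENNReal.ofReal_le_ofReal_iff (mul_nonneg ht.1.le (by positivity))).1 hint) ht.1

lemma measure_lt_abs_le_of_decRearr_le (hx : Measurable x) {m τ : ℝ} (hm : 0 < m)
    (hr : ∀ t ∈ Ioc (0 : ℝ) 1, decRearr x t ≤ m * √(logb 2 (2 / t))) (hτ : 0 ≤ τ) :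
    unitMeasure {z | τ < |x z|} ≤ ENNReal.ofReal (2 * 2 ^ (-(τ / m) ^ 2)) := by
  refine le_of_forall_gt_imp_ge_of_dense fun c hc => ?_
  rcases le_or_gt 1 c with hc1 | hc1
  · exact prob_le_one.trans hc1
  obtain ⟨t, rfl⟩ : ∃ t, c = ENNReal.ofReal t :=
    ⟨c.toReal, (ENNReal.ofReal_toReal hc1.ne_top).symm⟩
  have hrt : 2 * 2 ^ (-(τ / m) ^ 2) < t := (ENNReal.ofReal_lt_ofReal_iff'.1 hc).1
  have ht1 : t < 1 := by simpa using hc1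
  have ht0 : 0 < t := (by positivity : (0 : ℝ) < 2 * 2 ^ (-(τ / m) ^ 2)).trans hrt
  -- at any `t > 2 ⋅ 2^{-(τ/m)²}` the bound on `x*` is already below `τ`
  have hlogb : logb 2 (2 / t) < (τ / m) ^ 2 := by
    rw [rpow_neg zero_le_two, ← div_eq_mul_inv, div_lt_iff₀ (by positivity)] at hrt
    rw [logb_lt_iff_lt_rpow one_lt_two (by positivity), div_lt_iff₀ ht0, mul_comm]
    exact hrt
  refine measure_lt_abs_le_of_decRearr_lt hx ht0 ((hr t ⟨ht0, ht1.le⟩).trans_lt ?_)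
  calc m * √(logb 2 (2 / t)) < m * √((τ / m) ^ 2) := by
        gcongr
        exact logb_nonneg one_lt_two ((le_div_iff₀ ht0).2 (by linarith))
    _ = τ := by rw [sqrt_sq (by positivity), mul_div_cancel₀ _ hm.ne']

lemma orliczModular_le_one_of_decRearr_le (hx : Measurable x) {m : ℝ} (hm : 0 < m)
    (hr : ∀ t ∈ Ioc (0 : ℝ) 1, decRearr x t ≤ m * √(logb 2 (2 / t))) :
    orliczModular x (2 / √(log 2) * m) ≤ 1 := by
  set u := 2 / √(log 2) * m with hu_def
  have hlog2 : 0 < log 2 := log_pos one_lt_two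
  have hu : 0 < u := by positivity
  have hlevel : ∀ l ∈ Ioi (0 : ℝ), unitMeasure {z | l < exp ((x z / u) ^ 2) - 1}
      ≤ ENNReal.ofReal 2 * ENNReal.ofReal ((1 + l) ^ (-4 : ℝ)) := by
    intro l hl
    have hl1 : 0 < 1 + l := by linarith [mem_Ioi.1 hl]
    have hexp : (u * √(log (1 + l)) / m) ^ 2 = logb 2 (1 + l) * 4 := by
      rw [hu_def, div_pow, mul_pow, mul_pow, div_pow, sq_sqrt hlog2.le,
        sq_sqrt (log_nonneg (by linarith [mem_Ioi.1 hl])), logb]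
      field_simp
      ring
    simp_rw [lt_exp_sq_sub_one_iff (le_of_lt hl) hu]
    refine (measure_lt_abs_le_of_decRearr_le hx hm hr (by positivity)).trans_eq ?_
    rw [hexp, ← ENNReal.ofReal_mul zero_le_two, ← mul_neg, rpow_mul zero_le_two,
      rpow_logb two_pos (by norm_num) hl1]
  calc orliczModular x u = ∫⁻ l in Ioi 0, unitMeasure {z | l < exp ((x z / u) ^ 2) - 1} :=
        lintegral_eq_lintegral_meas_lt unitMeasure
          (ae_of_all _ fun z => by simpa using one_le_exp (sq_nonneg (x z / u)))
          (measurable_exp_sq_sub_one hx u).aemeasurable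
    _ ≤ ∫⁻ l in Ioi 0, ENNReal.ofReal 2 * ENNReal.ofReal ((1 + l) ^ (-4 : ℝ)) :=
        setLIntegral_mono' measurableSet_Ioi hlevel
    _ = ENNReal.ofReal (2 * (1 / (4 - 1))) := by
        rw [lintegral_const_mul' _ _ ENNReal.ofReal_ne_top,
          lintegral_Ioi_one_add_rpow_neg (by norm_num), ENNReal.ofReal_mul zero_le_two]
    _ ≤ 1 := ENNReal.ofReal_le_one.2 (by norm_num)

lemma luxemburgN_le_of_marcinkiewiczNorm_lt (hx : Measurable x) {m : ℝ≥0∞}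
    (hM : marcinkiewiczNorm x < m) : luxemburgN x ≤ ENNReal.ofReal (2 / √(log 2)) * m := by
  have hC : 0 < 2 / √(log 2) := div_pos two_pos (sqrt_pos.2 (log_pos one_lt_two))
  rcases eq_or_ne m ⊤ with rfl | hm
  · simp [ENNReal.mul_top, hC]
  obtain ⟨m, rfl⟩ : ∃ m' : ℝ, m = ENNReal.ofReal m' :=
    ⟨m.toReal, (ENNReal.ofReal_toReal hm).symm⟩
  have hm0 : 0 < m := ENNReal.ofReal_pos.1 (zero_le.trans_lt hM)
  rw [← ENNReal.ofReal_mul hC.le]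
  exact luxemburgN_le (by positivity) (orliczModular_le_one_of_decRearr_le hx hm0
    fun t ht => decRearr_le_of_marcinkiewiczNorm_le hx hm0.le hM.le ht)

end

/-- The Orlicz space `L_N`, `N(u) = exp(u²) - 1`, coincides with the Marcinkiewicz
space `M(φ)`, `φ(t) = t log₂^{1/2}(2/t)`, with equivalent norms. -/
theorem orlicz_eq_marcinkiewicz :
    ∃ c C : ℝ, 0 < c ∧ 0 < C ∧
      ∀ x : ℝ → ℝ, Measurable x →
        ENNReal.ofReal c * marcinkiewiczNorm x ≤ luxemburgN x ∧
          luxemburgN x ≤ ENNReal.ofReal C * marcinkiewiczNorm x := by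
  set K := (1 + (log 2)⁻¹) * √(log 2)
  have hK : 0 < K := by have := log_pos one_lt_two; positivity
  refine ⟨K⁻¹, 2 / √(log 2), inv_pos.2 hK, div_pos two_pos (sqrt_pos.2 (log_pos one_lt_two)),
    fun x hx => ⟨le_luxemburgN fun u hu hmod => ?_, ?_⟩⟩
  · calc ENNReal.ofReal K⁻¹ * marcinkiewiczNorm x
        ≤ ENNReal.ofReal K⁻¹ * ENNReal.ofReal (K * u) := by
          gcongr; exact marcinkiewiczNorm_le_of_orliczModular_le_one hx hu hmod
      _ = ENNReal.ofReal u := by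
          rw [← ENNReal.ofReal_mul (by positivity), inv_mul_cancel_left₀ hK.ne']
  · exact ENNReal.le_mul_of_forall_lt (Or.inl (by simpa using sqrt_pos.2 (log_pos one_lt_two)))
      (Or.inl ENNReal.ofReal_ne_top) fun a ha m hm =>
        (luxemburgN_le_of_marcinkiewiczNorm_lt hx hm).trans (by gcongr)
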